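/- arXiv:2205.09848 — 2 statements merged into one kernel-verified Lean document; each statement's English description precedes it below -/
import Mathlib

section
/- The Christoffel symbols of the metric g̃ in the coordinates (x,y,z,t), defined by Γᵏᵢⱼ = (1/2) Σₗ g̃ᵏˡ (∂ᵢ g̃ⱼₗ + ∂ⱼ g̃ᵢₗ − ∂ₗ g̃ᵢⱼ) where (g̃ᵏˡ) is the inverse matrix of (g̃ᵢⱼ), are symmetric in the lower indices and their only nonzero values (up to this symmetry) are: Γ⁴₁₂ = 1/2, Γ⁴₁₃ = −t/2, Γ¹₁₄ = −t/2, Γ²₁₄ = −1/2, Γ⁴₂₂ = −t, Γ⁴₂₃ = 1/2 + 3t²/4, Γ¹₂₄ = −1/2 + t²/4, Γ³₂₄ = −1/2, Γ⁴₃₃ = −t(1 + t²/2), Γ²₃₄ = −1/2 + t²/4, Γ³₃₄ = t/2. -/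
noncomputable section

/-- The left-invariant frame fields e₁,e₂,e₃,e₄ on ℝ⁴ (coordinates x,y,z,t = p 0,...,p 3). -/
def eVF (i : Fin 4) (p : Fin 4 → ℝ) : Fin 4 → ℝ :=
  ![![1, 0, 0, 0],
    ![p 3, 1, 0, 0],
    ![(p 3) ^ 2 / 2, p 3, 1, 0],
    ![0, 0, 0, 1]] i

/-- The matrix of the metric g̃ at a point with last coordinate t. -/
def gMat (t : ℝ) : Matrix (Fin 4) (Fin 4) ℝ :=
  !![1, -t, t ^ 2 / 2, 0;
     -t, 1 + t ^ 2, -t * (1 + t ^ 2 / 2), 0;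
     t ^ 2 / 2, -t * (1 + t ^ 2 / 2), 1 + t ^ 2 + t ^ 4 / 4, 0;
     0, 0, 0, 1]

/-- The metric g̃ as a bilinear form on each tangent space. -/
def gMet (p X Y : Fin 4 → ℝ) : ℝ :=
  ∑ i, ∑ j, gMat (p 3) i j * X i * Y j

/-- Partial derivative in direction of the i-th coordinate. -/
def pd (i : Fin 4) (f : (Fin 4 → ℝ) → ℝ) (p : Fin 4 → ℝ) : ℝ :=
  deriv (fun s => f (Function.update p i s)) (p i)

/-- The Christoffel symbols Γᵏᵢⱼ of g̃. -/
def Chr (p : Fin 4 → ℝ) (k i j : Fin 4) : ℝ :=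
  (1 / 2) * ∑ l, (gMat (p 3))⁻¹ k l *
    (pd i (fun q => gMat (q 3) j l) p + pd j (fun q => gMat (q 3) i l) p
      - pd l (fun q => gMat (q 3) i j) p)

/-- The Levi-Civita connection of g̃ in coordinates. -/
def nabla (X Y : (Fin 4 → ℝ) → (Fin 4 → ℝ)) (p : Fin 4 → ℝ) : Fin 4 → ℝ :=
  fun k => (∑ i, X p i * pd i (fun q => Y q k) p)
    + ∑ i, ∑ j, Chr p k i j * X p i * Y p j

/-- Lie bracket of vector fields on ℝ⁴. -/
def bracket (X Y : (Fin 4 → ℝ) → (Fin 4 → ℝ)) (p : Fin 4 → ℝ) : Fin 4 → ℝ :=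
  fderiv ℝ Y p (X p) - fderiv ℝ X p (Y p)

/-- The curvature tensor R̃(X,Y)Z = ∇̃_X ∇̃_Y Z − ∇̃_Y ∇̃_X Z − ∇̃_{[X,Y]} Z. -/
def Riem (X Y Z : (Fin 4 → ℝ) → (Fin 4 → ℝ)) (p : Fin 4 → ℝ) : Fin 4 → ℝ :=
  nabla X (nabla Y Z) p - nabla Y (nabla X Z) p - nabla (bracket X Y) Z p

/-- The expected table of Christoffel symbols: ΓExp t k is the (symmetric) matrix
(i,j) ↦ Γᵏᵢⱼ, with the nonzero values listed in the paper and zero elsewhere. -/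
def ChrExp (t : ℝ) : Fin 4 → Matrix (Fin 4) (Fin 4) ℝ :=
  ![!![0, 0, 0, -t / 2;
      0, 0, 0, -1 / 2 + t ^ 2 / 4;
      0, 0, 0, 0;
      -t / 2, -1 / 2 + t ^ 2 / 4, 0, 0],
    !![0, 0, 0, -1 / 2;
      0, 0, 0, 0;
      0, 0, 0, -1 / 2 + t ^ 2 / 4;
      -1 / 2, 0, -1 / 2 + t ^ 2 / 4, 0],
    !![0, 0, 0, 0;
      0, 0, 0, -1 / 2;
      0, 0, 0, t / 2;
      0, -1 / 2, t / 2, 0],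
    !![0, 1 / 2, -t / 2, 0;
      1 / 2, -t, 1 / 2 + 3 * t ^ 2 / 4, 0;
      -t / 2, 1 / 2 + 3 * t ^ 2 / 4, -t * (1 + t ^ 2 / 2), 0;
      0, 0, 0, 0]]

/-!
The metric depends only on t, so the only nonzero partial derivatives of its entries are
∂ₜ g̃ᵢⱼ = g'ᵢⱼ. The Christoffel formula therefore collapses to
  Γᵏᵢⱼ = ½ (δᵢ₄ (g̃⁻¹g')ᵏⱼ + δⱼ₄ (g̃⁻¹g')ᵏᵢ − g̃ᵏ⁴ g'ᵢⱼ)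
(the coordinate t has index 3 in Lean), and the table is read off from closed forms of g̃⁻¹
and g̃⁻¹g'. Symmetry in the lower indices is inherited from the symmetry of g̃.
-/

open Matrix

def gInv (t : ℝ) : Matrix (Fin 4) (Fin 4) ℝ :=
  !![1 + t ^ 2 + t ^ 4 / 4, t + t ^ 3 / 2, t ^ 2 / 2, 0;
     t + t ^ 3 / 2, 1 + t ^ 2, t, 0;
     t ^ 2 / 2, t, 1, 0;
     0, 0, 0, 1]

def gDeriv (t : ℝ) : Matrix (Fin 4) (Fin 4) ℝ :=
  !![0, -1, t, 0;
     -1, 2 * t, -(1 + 3 * t ^ 2 / 2), 0;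
     t, -(1 + 3 * t ^ 2 / 2), 2 * t + t ^ 3, 0;
     0, 0, 0, 0]

lemma gMat_transpose (t : ℝ) : (gMat t)ᵀ = gMat t := by
  ext i j
  fin_cases i <;> fin_cases j <;> simp [gMat]

lemma gDeriv_transpose (t : ℝ) : (gDeriv t)ᵀ = gDeriv t := by
  ext i j
  fin_cases i <;> fin_cases j <;> simp [gDeriv]

lemma Chr_comm (p : Fin 4 → ℝ) (k i j : Fin 4) : Chr p k i j = Chr p k j i := by
  have hsymm (a b : Fin 4) (t : ℝ) : gMat t a b = gMat t b a := by
    rw [← transpose_apply (gMat t), gMat_transpose]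
  simp only [Chr, hsymm i j, add_comm (pd i _ p)]

lemma inv_gMat (t : ℝ) : (gMat t)⁻¹ = gInv t := by
  refine inv_eq_right_inv ?_
  ext i j
  fin_cases i <;> fin_cases j <;> simp [gMat, gInv, mul_apply, Fin.sum_univ_four] <;> ring

lemma hasDerivAt_gMat (j l : Fin 4) (t : ℝ) :
    HasDerivAt (fun s => gMat s j l) (gDeriv t j l) t := by
  fin_cases j <;> fin_cases l <;>
    simp only [gMat, gDeriv, of_apply, Fin.zero_eta, Fin.mk_one, Fin.reduceFinMk, cons_val]
  all_goals first
    | exact hasDerivAt_const t _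
    | exact hasDerivAt_neg t
    | exact ((hasDerivAt_pow 2 t).div_const 2).congr_deriv (by ring)
    | exact ((hasDerivAt_pow 2 t).const_add 1).congr_deriv (by ring)
    | exact (((hasDerivAt_pow 2 t).const_add 1).add
        ((hasDerivAt_pow 4 t).div_const 4)).congr_deriv (by ring)
    | exact ((hasDerivAt_neg t).mul
        (((hasDerivAt_pow 2 t).div_const 2).const_add 1)).congr_deriv (by ring)

lemma pd_comp_eval_of_ne (f : ℝ → ℝ) {i m : Fin 4} (h : i ≠ m) (p : Fin 4 → ℝ) :
    pd i (fun q => f (q m)) p = 0 := by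
  simp [pd, Function.update_of_ne h.symm]

lemma pd_comp_eval_self (f : ℝ → ℝ) (m : Fin 4) (p : Fin 4 → ℝ) :
    pd m (fun q => f (q m)) p = deriv f (p m) := by
  simp [pd]

lemma pd_gMat (i j l : Fin 4) (p : Fin 4 → ℝ) :
    pd i (fun q => gMat (q 3) j l) p = if i = 3 then gDeriv (p 3) j l else 0 := by
  split_ifs with hi
  · rw [hi, pd_comp_eval_self (fun s => gMat s j l), (hasDerivAt_gMat j l _).deriv]
  · exact pd_comp_eval_of_ne (fun s => gMat s j l) hi p

lemma Chr_eq_gInv_mul_gDeriv (p : Fin 4 → ℝ) (k i j : Fin 4) :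
    Chr p k i j = ((if i = 3 then (gInv (p 3) * gDeriv (p 3)) k j else 0)
      + (if j = 3 then (gInv (p 3) * gDeriv (p 3)) k i else 0)
      - gInv (p 3) k 3 * gDeriv (p 3) i j) / 2 := by
  have hcol (a : Fin 4) :
      (gInv (p 3) * gDeriv (p 3)) k a = ∑ l, gInv (p 3) k l * gDeriv (p 3) a l := by
    nth_rw 1 [← gDeriv_transpose]
    rfl
  simp only [Chr, inv_gMat, pd_gMat, mul_add, mul_sub, Finset.sum_add_distrib,
    Finset.sum_sub_distrib, mul_ite, mul_zero, Finset.sum_ite_eq', Finset.mem_univ, if_true,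
    Finset.sum_ite_irrel, Finset.sum_const_zero, hcol]
  split_ifs <;> ring

lemma gInv_mul_gDeriv (t : ℝ) : gInv t * gDeriv t =
    !![-t, -1 + t ^ 2 / 2, 0, 0;
       -1, 0, -1 + t ^ 2 / 2, 0;
       0, -1, t, 0;
       0, 0, 0, 0] := by
  ext i j
  fin_cases i <;> fin_cases j <;> simp [gInv, gDeriv, mul_apply, Fin.sum_univ_four] <;> ring

lemma Chr_eq_ChrExp (p : Fin 4 → ℝ) (k i j : Fin 4) : Chr p k i j = ChrExp (p 3) k i j := by
  rw [Chr_eq_gInv_mul_gDeriv, gInv_mul_gDeriv]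
  fin_cases k <;> fin_cases i <;> fin_cases j <;> simp [gInv, gDeriv, ChrExp] <;> ring

/-- The Christoffel symbols of g̃ are symmetric in the lower indices and their
values are exactly those of the stated table. -/
theorem nil4_christoffel :
    ∀ (p : Fin 4 → ℝ) (k i j : Fin 4),
      Chr p k i j = Chr p k j i ∧ Chr p k i j = ChrExp (p 3) k i j :=
  fun p k i j => ⟨Chr_comm p k i j, Chr_eq_ChrExp p k i j⟩
end
end

section
/- For all i, j, k ∈ {1, 2, 3} and every point p ∈ ℝ⁴, g̃_p(R̃(eᵢ, eⱼ)eₖ, e₄) = 0. (Hence any hypersurface of (ℝ⁴, g̃) whose unit normal is e₄ satisfies the vanishing of the normal curvature components required for its second fundamental form to be a Codazzi tensor.) -/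
noncomputable section

/-!
The metric is `h(t) + dt²` with `h` depending on `t` only. Hence, for horizontal indices
`i, j, k`, the Christoffel symbols `Γᵏᵢⱼ` and `Γ⁴ᵢ₄` vanish. Let `X, Y, Z` be horizontal fields whose
coefficients depend on `t` only, such as `e₁, e₂, e₃`. Then `[X, Y] = 0`, and `∇̃_Y Z` is a multiple
of `∂ₜ` by a function of `t`. Differentiating such a field along `X` produces no `∂ₜ`-component.
So `R̃(X, Y)Z` is horizontal, and `g̃(·, e₄)` reads off its `∂ₜ`-component.
-/

section DependsOnLast

variable {β : Type*} {F : (Fin 4 → ℝ) → β}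

lemma DependsOn.apply_eq_of_apply_three_eq (hF : DependsOn F {3}) {p q : Fin 4 → ℝ}
    (h : p 3 = q 3) : F p = F q :=
  hF (by simpa using h)

lemma DependsOn.apply_update_of_ne (hF : DependsOn F {3}) {i : Fin 4} (hi : i ≠ 3)
    (p : Fin 4 → ℝ) (s : ℝ) : F (Function.update p i s) = F p :=
  hF.apply_eq_of_apply_three_eq (Function.update_of_ne hi.symm s p)

lemma DependsOn.apply_component {F : (Fin 4 → ℝ) → Fin 4 → ℝ} (hF : DependsOn F {3})
    (k : Fin 4) : DependsOn (fun q => F q k) {3} :=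
  fun _ _ h => congrFun (hF h) k

end DependsOnLast

section PartialDerivatives

variable {F : (Fin 4 → ℝ) → ℝ}

lemma pd_eq_zero_of_dependsOn (hF : DependsOn F {3}) {i : Fin 4} (hi : i ≠ 3)
    (p : Fin 4 → ℝ) : pd i F p = 0 := by
  simp only [pd, hF.apply_update_of_ne hi, deriv_const]

lemma dependsOn_pd (hF : DependsOn F {3}) (i : Fin 4) : DependsOn (pd i F) {3} := by
  intro p q h
  have h3 : p 3 = q 3 := by simpa using h
  by_cases hi : i = 3
  · subst hi
    have hline : (fun s => F (Function.update p 3 s)) = fun s => F (Function.update q 3 s) :=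
      funext fun s => hF.apply_eq_of_apply_three_eq (by simp)
    simp only [pd, hline, h3]
  · rw [pd_eq_zero_of_dependsOn hF hi, pd_eq_zero_of_dependsOn hF hi]

lemma fderiv_apply_eq_zero_of_dependsOn {E : Type*} [NormedAddCommGroup E] [NormedSpace ℝ E]
    {G : (Fin 4 → ℝ) → E} (hG : DependsOn G {3}) (p : Fin 4 → ℝ) {v : Fin 4 → ℝ}
    (hv : v 3 = 0) : fderiv ℝ G p v = 0 := by
  by_cases hd : DifferentiableAt ℝ G p
  · have hline : (fun s : ℝ => G (p + s • v)) = fun _ => G p :=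
      funext fun s => hG.apply_eq_of_apply_three_eq (by simp [hv])
    rw [← hd.lineDeriv_eq_fderiv, lineDeriv, hline, deriv_const]
  · simp [fderiv_zero_of_not_differentiableAt hd]

end PartialDerivatives

lemma gMat_inv (t : ℝ) : (gMat t)⁻¹ =
    !![1 + t ^ 2 + t ^ 4 / 4, t + t ^ 3 / 2, t ^ 2 / 2, 0;
       t + t ^ 3 / 2, 1 + t ^ 2, t, 0;
       t ^ 2 / 2, t, 1, 0;
       0, 0, 0, 1] := by
  apply Matrix.inv_eq_right_inv
  ext i j
  fin_cases i <;> fin_cases j <;>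
    simp [gMat, Matrix.mul_apply, Fin.sum_univ_four] <;> ring

lemma gMat_inv_apply_three_right (t : ℝ) {k : Fin 4} (hk : k ≠ 3) : (gMat t)⁻¹ k 3 = 0 := by
  fin_cases k <;> simp_all [gMat_inv]

lemma gMat_inv_apply_three_left (t : ℝ) {l : Fin 4} (hl : l ≠ 3) : (gMat t)⁻¹ 3 l = 0 := by
  fin_cases l <;> simp_all [gMat_inv]

lemma dependsOn_gMat_apply (i j : Fin 4) : DependsOn (fun q : Fin 4 → ℝ => gMat (q 3) i j) {3} :=
  fun _ _ h => by simp_all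

lemma dependsOn_Chr : DependsOn Chr {3} := by
  intro p q h
  have h3 : p 3 = q 3 := by simpa using h
  have hpd (i j l : Fin 4) :
      pd i (fun q => gMat (q 3) j l) p = pd i (fun q => gMat (q 3) j l) q :=
    dependsOn_pd (dependsOn_gMat_apply j l) i h
  ext k i j
  simp only [Chr, h3, hpd]

lemma Chr_eq_zero_of_ne_three {k i j : Fin 4} (hk : k ≠ 3) (hi : i ≠ 3) (hj : j ≠ 3)
    (p : Fin 4 → ℝ) : Chr p k i j = 0 := by
  refine mul_eq_zero_of_right _ (Finset.sum_eq_zero fun l _ => ?_)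
  rw [pd_eq_zero_of_dependsOn (dependsOn_gMat_apply _ _) hi,
    pd_eq_zero_of_dependsOn (dependsOn_gMat_apply _ _) hj]
  by_cases hl : l = 3
  · rw [hl, gMat_inv_apply_three_right _ hk, zero_mul]
  · rw [pd_eq_zero_of_dependsOn (dependsOn_gMat_apply _ _) hl]
    ring

lemma Chr_three_three_eq_zero {i : Fin 4} (hi : i ≠ 3) (p : Fin 4 → ℝ) : Chr p 3 i 3 = 0 := by
  refine mul_eq_zero_of_right _ (Finset.sum_eq_zero fun l _ => ?_)
  rw [pd_eq_zero_of_dependsOn (dependsOn_gMat_apply _ _) hi]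
  by_cases hl : l = 3
  · rw [hl]
    ring
  · rw [gMat_inv_apply_three_left _ hl, zero_mul]

section Connection

variable {X Y Z : (Fin 4 → ℝ) → Fin 4 → ℝ}

lemma nabla_apply_of_horizontal (hX : ∀ p, X p 3 = 0) (hY : DependsOn Y {3})
    (p : Fin 4 → ℝ) (k : Fin 4) :
    nabla X Y p k = ∑ i, ∑ j, Chr p k i j * X p i * Y p j := by
  refine (add_eq_right.2 (Finset.sum_eq_zero fun i _ => ?_))
  by_cases hi : i = 3
  · rw [hi, hX, zero_mul]
  · rw [pd_eq_zero_of_dependsOn (hY.apply_component k) hi, mul_zero]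

lemma nabla_apply_eq_zero_of_ne_three (hX : ∀ p, X p 3 = 0) (hY : DependsOn Y {3})
    (hY3 : ∀ p, Y p 3 = 0) (p : Fin 4 → ℝ) {k : Fin 4} (hk : k ≠ 3) : nabla X Y p k = 0 := by
  rw [nabla_apply_of_horizontal hX hY]
  refine Finset.sum_eq_zero fun i _ => Finset.sum_eq_zero fun j _ => ?_
  by_cases hi : i = 3
  · rw [hi, hX, mul_zero, zero_mul]
  by_cases hj : j = 3
  · rw [hj, hY3, mul_zero]
  rw [Chr_eq_zero_of_ne_three hk hi hj, zero_mul, zero_mul]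

lemma nabla_apply_three_eq_zero_of_vertical (hX : ∀ p, X p 3 = 0) (hY : DependsOn Y {3})
    (hY_vert : ∀ p k, k ≠ 3 → Y p k = 0) (p : Fin 4 → ℝ) : nabla X Y p 3 = 0 := by
  rw [nabla_apply_of_horizontal hX hY]
  refine Finset.sum_eq_zero fun i _ => Finset.sum_eq_zero fun j _ => ?_
  by_cases hj : j = 3
  · by_cases hi : i = 3
    · rw [hi, hX, mul_zero, zero_mul]
    · rw [hj, Chr_three_three_eq_zero hi, zero_mul, zero_mul]
  · rw [hY_vert p j hj, mul_zero]

lemma dependsOn_nabla (hX : DependsOn X {3}) (hY : DependsOn Y {3}) :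
    DependsOn (nabla X Y) {3} := by
  intro p q h
  have hpd (i k : Fin 4) : pd i (fun q => Y q k) p = pd i (fun q => Y q k) q :=
    dependsOn_pd (hY.apply_component k) i h
  ext k
  simp only [nabla, hX h, hY h, dependsOn_Chr h, hpd]

lemma bracket_eq_zero (hX : DependsOn X {3}) (hY : DependsOn Y {3}) (hX3 : ∀ p, X p 3 = 0)
    (hY3 : ∀ p, Y p 3 = 0) : bracket X Y = 0 := by
  ext p : 1
  rw [bracket, fderiv_apply_eq_zero_of_dependsOn hY p (hX3 p),
    fderiv_apply_eq_zero_of_dependsOn hX p (hY3 p), sub_zero, Pi.zero_apply]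

lemma Riem_apply_three_eq_zero (hX : DependsOn X {3}) (hY : DependsOn Y {3})
    (hZ : DependsOn Z {3}) (hX3 : ∀ p, X p 3 = 0) (hY3 : ∀ p, Y p 3 = 0) (hZ3 : ∀ p, Z p 3 = 0)
    (p : Fin 4 → ℝ) : Riem X Y Z p 3 = 0 := by
  have hYXZ := nabla_apply_three_eq_zero_of_vertical hY3 (dependsOn_nabla hX hZ)
    (fun q _ hk => nabla_apply_eq_zero_of_ne_three hX3 hZ hZ3 q hk) p
  have hXYZ := nabla_apply_three_eq_zero_of_vertical hX3 (dependsOn_nabla hY hZ)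
    (fun q _ hk => nabla_apply_eq_zero_of_ne_three hY3 hZ hZ3 q hk) p
  simp only [Riem, Pi.sub_apply, hYXZ, hXYZ, bracket_eq_zero hX hY hX3 hY3]
  simp [nabla]

end Connection

lemma gMet_eVF_three (p V : Fin 4 → ℝ) : gMet p V (eVF 3 p) = V 3 := by
  simp [gMet, Fin.sum_univ_four, gMat, eVF]

lemma dependsOn_eVF (a : Fin 4) : DependsOn (eVF a) {3} :=
  fun _ _ h => by simp_all [eVF]

lemma eVF_apply_three {a : Fin 4} (ha : a ≠ 3) (p : Fin 4 → ℝ) : eVF a p 3 = 0 := by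
  fin_cases a <;> simp_all [eVF]

/-- For all i,j,k ∈ {1,2,3}, g̃(R̃(eᵢ,eⱼ)eₖ, e₄) = 0. -/
theorem nil4_codazzi_for_e4 :
    ∀ (p : Fin 4 → ℝ) (i j k : Fin 3),
      gMet p (Riem (eVF i.castSucc) (eVF j.castSucc) (eVF k.castSucc) p)
        (eVF 3 p) = 0 := by
  intro p i j k
  have horizontal (m : Fin 3) : ∀ q, eVF m.castSucc q 3 = 0 :=
    eVF_apply_three (Fin.castSucc_lt_last m).ne
  rw [gMet_eVF_three]
  exact Riem_apply_three_eq_zero (dependsOn_eVF _) (dependsOn_eVF _) (dependsOn_eVF _)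
    (horizontal i) (horizontal j) (horizontal k) p
end
end
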